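/- arXiv:2003.13338 — 2 statements merged into one kernel-verified Lean document; each statement's English description precedes it below -/
import Mathlib

section
/- Let N = (V, A, c) be a network, y, z ∈ V distinct, and f a flow from y to z in N that is not a maximum flow. Then there exists an augmenting path for f from y to z in N and, for every augmenting path σ for f from y to z, the function f + χ_σ is a flow from y to z in N with value v(f + χ_σ) = v(f) + 1. -/
/-!
Networks on the complete digraph: capacities `c : V → V → ℕ` with no loops
(arcs are ordered pairs of distinct vertices; loops are given capacity 0).
-/

structure Network (V : Type*) where
  c : V → V → ℕ
  no_loop : ∀ v, c v v = 0

namespace NetFlow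

variable {V : Type*} [Fintype V] [DecidableEq V]

/-- `f` is a flow from `y` to `z` in `N`. -/
def IsFlow (N : Network V) (y z : V) (f : V → V → ℕ) : Prop :=
  (∀ u v, f u v ≤ N.c u v) ∧
  (∀ x, x ≠ y → x ≠ z → ∑ u, f u x = ∑ u, f x u)

/-- The value of a flow from `y`. -/
def flowValue (f : V → V → ℕ) (y : V) : ℤ :=
  (∑ u, (f y u : ℤ)) - ∑ u, (f u y : ℤ)

/-- The maximum flow value `φ^N_{yz}`. -/
noncomputable def maxFlowValue (N : Network V) (y z : V) : ℕ :=
  sSup {m : ℕ | ∃ f, IsFlow N y z f ∧ flowValue f y = (m : ℤ)}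

/-- `f` is a maximum flow from `y` to `z` in `N`. -/
def IsMaxFlow (N : Network V) (y z : V) (f : V → V → ℕ) : Prop :=
  IsFlow N y z f ∧ flowValue f y = (maxFlowValue N y z : ℤ)

/-- The network `N_X`: capacities of arcs incident to `X` are set to zero. -/
def removeVerts (N : Network V) (X : Finset V) : Network V where
  c u v := if u ∈ X ∨ v ∈ X then 0 else N.c u v
  no_loop v := by simp [N.no_loop v]

/-- `φ^N_{yz}(X) = φ^N_{yz} - φ^{N_X}_{yz}`. -/
noncomputable def phiDrop (N : Network V) (y z : V) (X : Finset V) : ℤ :=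
  (maxFlowValue N y z : ℤ) - (maxFlowValue (removeVerts N X) y z : ℤ)

/-- The (consecutive) arcs of a list of vertices. -/
def pathArcs (p : List V) : List (V × V) := p.zip p.tail

/-- `p` is a path from `y` to `z` in `N`: at least two distinct vertices, starting at `y`,
ending at `z`, with all consecutive arcs of positive capacity. -/
def IsPath (N : Network V) (y z : V) (p : List V) : Prop :=
  2 ≤ p.length ∧ p.Nodup ∧ p.head? = some y ∧ p.getLast? = some z ∧
    p.Chain' fun u v => 1 ≤ N.c u v

/-- `p` is a cycle in `N`. -/
def IsCycle (N : Network V) (p : List V) : Prop :=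
  3 ≤ p.length ∧ p.dropLast.Nodup ∧ p.head? = p.getLast? ∧
    p.Chain' fun u v => 1 ≤ N.c u v

/-- A sequence of arc-disjoint paths from `y` to `z` in `N`: each component is a path, and
each arc `a` is used by at most `c a` components. -/
def IsPathSeq (N : Network V) (y z : V) (γ : List (List V)) : Prop :=
  (∀ p ∈ γ, IsPath N y z p) ∧
  ∀ u v : V, γ.countP (fun p => decide ((u, v) ∈ pathArcs p)) ≤ N.c u v

/-- `λ^N_{yz}`: the maximum length of a sequence of arc-disjoint paths from `y` to `z`. -/
noncomputable def maxSeqLen (N : Network V) (y z : V) : ℕ :=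
  sSup {m : ℕ | ∃ γ : List (List V), IsPathSeq N y z γ ∧ γ.length = m}

/-- `M^N_{yz}`: the sequences of arc-disjoint paths from `y` to `z` of maximum length. -/
def MaxSeqs (N : Network V) (y z : V) : Set (List (List V)) :=
  {γ | IsPathSeq N y z γ ∧ γ.length = maxSeqLen N y z}

/-- `l_X(γ)`: the number of components of `γ` having a vertex in `X`. -/
def lX (X : Finset V) (γ : List (List V)) : ℕ :=
  γ.countP fun p => p.any fun x => decide (x ∈ X)

/-- `λ^N_{yz}(X)`: the minimum of `l_X` over maximum-length sequences of arc-disjoint paths. -/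
noncomputable def lambdaX (N : Network V) (y z : V) (X : Finset V) : ℕ :=
  sInf {n : ℕ | ∃ γ ∈ MaxSeqs N y z, lX X γ = n}

/-- The flow through a vertex: `f(x) = Σ_{a exiting x} f(a)` if `x ∉ {y,z}`, `v(f)` otherwise. -/
def vertexFlow (f : V → V → ℕ) (y z x : V) : ℤ :=
  if x = y ∨ x = z then flowValue f y else ∑ u, (f x u : ℤ)

/-- `δ^N_{yz}(X)`: the minimum of `f(X) = Σ_{x∈X} f(x)` over maximum flows `f`. -/
noncomputable def deltaX (N : Network V) (y z : V) (X : Finset V) : ℕ :=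
  sInf {n : ℕ | ∃ f, IsMaxFlow N y z f ∧ (∑ x ∈ X, vertexFlow f y z x) = (n : ℤ)}

/-- The flow `f_γ` associated with a sequence of arc-disjoint paths. -/
def seqFlow (γ : List (List V)) (u v : V) : ℕ :=
  γ.countP fun p => decide ((u, v) ∈ pathArcs p)

/-- The path (or cycle) function `χ_p` of a path or cycle `p`. -/
def chi (p : List V) (u v : V) : ℕ := (pathArcs p).count (u, v)

/-- `(γ, w)` is a decomposition of the flow `f`: `γ` is a sequence of `v(f)` paths from `y`
to `z`, `w` a sequence of cycles, and `f = Σ_j χ_{γ_j} + Σ_j χ_{w_j}`. -/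
def IsDecomposition (N : Network V) (y z : V) (f : V → V → ℕ)
    (γ w : List (List V)) : Prop :=
  (∀ p ∈ γ, IsPath N y z p) ∧ (∀ q ∈ w, IsCycle N q) ∧
  (γ.length : ℤ) = flowValue f y ∧
  ∀ u v : V, f u v = (γ.map fun p => chi p u v).sum + (w.map fun q => chi q u v).sum

/-- The forward arcs of a generalized path given by vertices `p` and directions `d`. -/
def forwardArcs (p : List V) (d : List Bool) : List (V × V) :=
  ((p.zip p.tail).zip d).filterMap fun e => if e.2 then some e.1 else none

/-- The backward arcs of a generalized path given by vertices `p` and directions `d`. -/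
def backwardArcs (p : List V) (d : List Bool) : List (V × V) :=
  ((p.zip p.tail).zip d).filterMap fun e => if e.2 then none else some (e.1.2, e.1.1)

/-- `(p, d)` is a generalized path from `y` to `z`: distinct vertices `x_1 = y, …, x_m = z`
(`m ≥ 2`), the `i`-th arc being `(x_i, x_{i+1})` (forward, `d_i = true`) or `(x_{i+1}, x_i)`
(backward, `d_i = false`). -/
def IsGenPath (y z : V) (p : List V) (d : List Bool) : Prop :=
  2 ≤ p.length ∧ p.Nodup ∧ p.head? = some y ∧ p.getLast? = some z ∧
    d.length + 1 = p.length

/-- `(p, d)` is an augmenting path for `f` from `y` to `z` in `N`. -/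
def IsAugPath (N : Network V) (y z : V) (f : V → V → ℕ)
    (p : List V) (d : List Bool) : Prop :=
  IsGenPath y z p d ∧
  (∀ a ∈ forwardArcs p d, f a.1 a.2 < N.c a.1 a.2) ∧
  (∀ a ∈ backwardArcs p d, 1 ≤ f a.1 a.2)

/-- `χ_σ` for a generalized path `σ = (p, d)`: `+1` on forward arcs, `-1` on backward arcs. -/
def chiGen (p : List V) (d : List Bool) (u v : V) : ℤ :=
  ((forwardArcs p d).count (u, v) : ℤ) - ((backwardArcs p d).count (u, v) : ℤ)

/-- The full flow vitality group centrality measure `φ^N(X)`. -/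
noncomputable def phiGC (N : Network V) (X : Finset V) : ℝ :=
  ∑ a ∈ Finset.univ.filter (fun a : V × V => a.1 ≠ a.2 ∧ 0 < maxFlowValue N a.1 a.2),
    (phiDrop N a.1 a.2 X : ℝ) / (maxFlowValue N a.1 a.2 : ℝ)

/-- The full flow betweenness group centrality measure `λ^N(X)`. -/
noncomputable def lambdaGC (N : Network V) (X : Finset V) : ℝ :=
  ∑ a ∈ Finset.univ.filter (fun a : V × V => a.1 ≠ a.2 ∧ 0 < maxFlowValue N a.1 a.2),
    (lambdaX N a.1 a.2 X : ℝ) / (maxFlowValue N a.1 a.2 : ℝ)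

end NetFlow

/-!
Augmenting along `σ` changes the net outflow at a vertex `x` by `[x = y] - [x = z]`: each step
of `σ`, forward or backward, raises the net outflow at its first vertex by one and lowers it at
its second, so the contributions telescope. Since `f` is positive on backward arcs and
unsaturated on forward arcs, `f + χ_σ` stays within `0` and the capacities, hence is a flow of
value `v(f) + 1`.

If there is no augmenting path, let `S` be the set of vertices reachable from `y` along residual
arcs (unsaturated arcs, and reversed arcs carrying flow). Then `z ∉ S`, every arc leaving `S` is
saturated and every arc entering `S` is empty, so `v(f)` equals the capacity of the cut `S`,
which bounds the value of every flow: `f` is maximum.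
-/

namespace List

variable {α : Type*}

theorem exists_nodup_isChain_of_reflTransGen [DecidableEq α] {r : α → α → Prop} {a b : α}
    (h : Relation.ReflTransGen r a b) :
    ∃ l : List α, l.Nodup ∧ l.head? = some a ∧ l.getLast? = some b ∧ l.IsChain r := by
  induction h using Relation.ReflTransGen.head_induction_on with
  | refl => exact ⟨[b], nodup_singleton b, rfl, rfl, isChain_singleton b⟩
  | @head a c hac _ ih =>
    obtain ⟨l, hnd, hhd, hlast, hch⟩ := ih
    by_cases ha : a ∈ l
    · -- shortcut: restart the path at the occurrence of `a`
      refine ⟨l.drop (l.idxOf a), hnd.sublist (drop_sublist _ _), ?_, ?_, hch.drop _⟩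
      · rw [head?_drop, getElem?_idxOf ha]
      · rw [getLast?_drop, if_neg (by simpa using idxOf_lt_length_of_mem ha), hlast]
    · obtain ⟨l', rfl⟩ : ∃ l', l = c :: l' := ⟨l.tail, (cons_head?_tail hhd).symm⟩
      refine ⟨a :: c :: l', nodup_cons.2 ⟨ha, hnd⟩, rfl, ?_, hch.cons_cons hac⟩
      simpa using hlast

theorem two_le_length_of_head?_of_getLast? {l : List α} {a b : α} (hab : a ≠ b)
    (ha : l.head? = some a) (hb : l.getLast? = some b) : 2 ≤ l.length := by
  rcases l with _ | ⟨x, _ | ⟨y, l⟩⟩ <;> simp_all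

theorem Nodup.head_ne_getLast {l : List α} {a b : α} (hl : l.Nodup) (h2 : 2 ≤ l.length)
    (ha : l.head? = some a) (hb : l.getLast? = some b) : a ≠ b := by
  rcases l with _ | ⟨x, _ | ⟨y, l⟩⟩
  · simp at ha
  · simp at h2
  · simp only [head?_cons, Option.some.injEq] at ha
    subst ha
    rw [getLast?_cons_cons] at hb
    intro hxb
    exact (nodup_cons.1 hl).1 (hxb ▸ mem_of_getLast? hb)

end List

namespace NetFlow

section Arcs

variable {V : Type*} {N : Network V} {y z : V} {f : V → V → ℕ} {p : List V} {d : List Bool}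

theorem forwardArcs_cons_cons (a v : V) (p : List V) (b : Bool) (d : List Bool) :
    forwardArcs (a :: v :: p) (b :: d) = forwardArcs [a, v] [b] ++ forwardArcs (v :: p) d := by
  cases b <;> rfl

theorem backwardArcs_cons_cons (a v : V) (p : List V) (b : Bool) (d : List Bool) :
    backwardArcs (a :: v :: p) (b :: d) = backwardArcs [a, v] [b] ++ backwardArcs (v :: p) d := by
  cases b <;> rfl

theorem forwardArcs_sublist (p : List V) (d : List Bool) :
    (forwardArcs p d).Sublist (pathArcs p) := by
  unfold forwardArcs pathArcs
  generalize p.zip p.tail = l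
  induction l generalizing d with
  | nil => simp
  | cons e l ih =>
    cases d with
    | nil => simp
    | cons b d => cases b <;> simp [ih]

theorem backwardArcs_sublist (p : List V) (d : List Bool) :
    (backwardArcs p d).Sublist ((pathArcs p).map Prod.swap) := by
  unfold backwardArcs pathArcs
  generalize p.zip p.tail = l
  induction l generalizing d with
  | nil => simp
  | cons e l ih =>
    cases d with
    | nil => simp
    | cons b d => cases b <;> simp [ih, Prod.swap]

theorem pathArcs_nodup (hp : p.Nodup) : (pathArcs p).Nodup := by
  have hsnd : (pathArcs p).map Prod.snd = p.tail := List.map_snd_zip (by simp)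
  exact List.Nodup.of_map Prod.snd (hsnd ▸ hp.sublist (List.tail_sublist p))

theorem rel_of_mem_pathArcs {r : V → V → Prop} (hp : p.IsChain r) {a : V × V}
    (ha : a ∈ pathArcs p) : r a.1 a.2 := by
  induction p with
  | nil => simp [pathArcs] at ha
  | cons u p ih =>
    cases p with
    | nil => simp [pathArcs] at ha
    | cons v p =>
      rw [List.isChain_cons_cons] at hp
      simp only [pathArcs, List.tail_cons, List.zip_cons_cons, List.mem_cons] at ha
      rcases ha with rfl | ha
      exacts [hp.1, ih hp.2 ha]

def Residual (N : Network V) (f : V → V → ℕ) (u v : V) : Prop :=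
  f u v < N.c u v ∨ 1 ≤ f v u

theorem exists_isAugPath_of_isChain_residual (h2 : 2 ≤ p.length) (hnd : p.Nodup)
    (hy : p.head? = some y) (hz : p.getLast? = some z) (hp : p.IsChain (Residual N f)) :
    ∃ d, IsAugPath N y z f p d := by
  -- traverse an arc forwards exactly when it is unsaturated
  set d := (pathArcs p).map fun a => decide (f a.1 a.2 < N.c a.1 a.2)
  have hzip : (pathArcs p).zip d =
      (pathArcs p).map fun a => (a, decide (f a.1 a.2 < N.c a.1 a.2)) :=
    List.map_prod_left_eq_zip.symm
  refine ⟨d, ⟨h2, hnd, hy, hz, by simp [d, pathArcs]; omega⟩, fun a ha => ?_, fun a ha => ?_⟩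
  · rw [forwardArcs, show p.zip p.tail = pathArcs p from rfl, hzip] at ha
    simp only [List.filterMap_map, Function.comp_apply, decide_eq_true_eq, List.mem_filterMap,
      Option.ite_none_right_eq_some, Option.some.injEq, exists_eq_right_right] at ha
    exact ha.2
  · rw [backwardArcs, show p.zip p.tail = pathArcs p from rfl, hzip] at ha
    simp only [List.filterMap_map, Function.comp_apply, decide_eq_true_eq, List.mem_filterMap,
      Option.ite_none_left_eq_some, not_lt, Option.some.injEq, Prod.exists] at ha
    obtain ⟨u, w, huw, hsat, rfl⟩ := ha
    exact (rel_of_mem_pathArcs hp huw).resolve_left (not_lt.2 hsat)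

variable [DecidableEq V]

theorem exists_isAugPath_of_reflTransGen_residual (hyz : y ≠ z)
    (h : Relation.ReflTransGen (Residual N f) y z) : ∃ p d, IsAugPath N y z f p d := by
  obtain ⟨p, hnd, hy, hz, hp⟩ := List.exists_nodup_isChain_of_reflTransGen h
  exact ⟨p, exists_isAugPath_of_isChain_residual
    (List.two_le_length_of_head?_of_getLast? hyz hy hz) hnd hy hz hp⟩

theorem chiGen_cons_cons (a v : V) (p : List V) (b : Bool) (d : List Bool) :
    chiGen (a :: v :: p) (b :: d) = chiGen [a, v] [b] + chiGen (v :: p) d := by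
  ext u w
  simp only [chiGen, Pi.add_apply]
  rw [forwardArcs_cons_cons, backwardArcs_cons_cons, List.count_append, List.count_append]
  push_cast
  ring

theorem count_forwardArcs_le_one (hp : p.Nodup) (d : List Bool) (a : V × V) :
    (forwardArcs p d).count a ≤ 1 :=
  List.nodup_iff_count_le_one.1 ((pathArcs_nodup hp).sublist (forwardArcs_sublist p d)) a

theorem count_backwardArcs_le_one (hp : p.Nodup) (d : List Bool) (a : V × V) :
    (backwardArcs p d).count a ≤ 1 :=
  List.nodup_iff_count_le_one.1
    (((pathArcs_nodup hp).map Prod.swap_injective).sublist (backwardArcs_sublist p d)) a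

theorem IsAugPath.add_chiGen_nonneg (hσ : IsAugPath N y z f p d) (u v : V) :
    0 ≤ (f u v : ℤ) + chiGen p d u v := by
  have hle := count_backwardArcs_le_one hσ.1.2.1 d (u, v)
  unfold chiGen
  by_cases hb : (u, v) ∈ backwardArcs p d
  · have : 1 ≤ f u v := hσ.2.2 _ hb
    omega
  · rw [List.count_eq_zero.2 hb]
    omega

theorem IsAugPath.add_chiGen_le (hσ : IsAugPath N y z f p d) {u v : V}
    (hfc : f u v ≤ N.c u v) : (f u v : ℤ) + chiGen p d u v ≤ N.c u v := by
  have hle := count_forwardArcs_le_one hσ.1.2.1 d (u, v)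
  unfold chiGen
  by_cases hf : (u, v) ∈ forwardArcs p d
  · have : f u v < N.c u v := hσ.2.1 _ hf
    omega
  · rw [List.count_eq_zero.2 hf]
    omega

end Arcs

section Flows

variable {V : Type*} [Fintype V] {N : Network V} {y z : V} {f : V → V → ℕ} {p : List V}
  {d : List Bool}

def netOut (g : V → V → ℤ) (x : V) : ℤ := ∑ u, g x u - ∑ u, g u x

theorem netOut_add (g h : V → V → ℤ) (x : V) : netOut (g + h) x = netOut g x + netOut h x := by
  simp only [netOut, Pi.add_apply, Finset.sum_add_distrib]
  ring

theorem flowValue_eq_netOut (f : V → V → ℕ) (y : V) :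
    flowValue f y = netOut (fun u v => (f u v : ℤ)) y :=
  rfl

theorem isFlow_iff_netOut (N : Network V) (y z : V) (g : V → V → ℕ) :
    IsFlow N y z g ↔ (∀ u v, g u v ≤ N.c u v) ∧
      ∀ x, x ≠ y → x ≠ z → netOut (fun u v => (g u v : ℤ)) x = 0 := by
  simp only [IsFlow, netOut, sub_eq_zero, ← Nat.cast_sum, Nat.cast_inj]
  exact and_congr_right' (forall₃_congr fun _ _ _ => eq_comm)

theorem isFlow_zero (N : Network V) (y z : V) : IsFlow N y z 0 :=
  ⟨fun _ _ => Nat.zero_le _, fun _ _ _ => rfl⟩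

theorem isMaxFlow_of_forall_flowValue_le (hf : IsFlow N y z f)
    (h : ∀ g, IsFlow N y z g → flowValue g y ≤ flowValue f y) : IsMaxFlow N y z f := by
  have hnonneg : 0 ≤ flowValue f y :=
    calc (0 : ℤ) = flowValue 0 y := by simp [flowValue]
      _ ≤ flowValue f y := h 0 (isFlow_zero N y z)
  obtain ⟨m, hm⟩ := Int.eq_ofNat_of_zero_le hnonneg
  have hmax : IsGreatest {m : ℕ | ∃ g, IsFlow N y z g ∧ flowValue g y = (m : ℤ)} m := by
    refine ⟨⟨f, hf, hm⟩, ?_⟩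
    rintro n ⟨g, hg, hgn⟩
    have := h g hg
    rw [hgn, hm] at this
    exact_mod_cast this
  exact ⟨hf, by rw [hm, maxFlowValue, hmax.csSup_eq]⟩

variable [DecidableEq V]

theorem IsFlow.flowValue_eq_sum_cut {g : V → V → ℕ} (hg : IsFlow N y z g) {S : Finset V}
    (hy : y ∈ S) (hz : z ∉ S) :
    flowValue g y = ∑ x ∈ S, ∑ u ∈ Sᶜ, ((g x u : ℤ) - g u x) := by
  have hcons := ((isFlow_iff_netOut N y z g).1 hg).2
  have hinner : ∑ x ∈ S, ∑ u ∈ S, ((g x u : ℤ) - g u x) = 0 := by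
    simp only [Finset.sum_sub_distrib]
    rw [Finset.sum_comm]
    exact sub_self _
  calc flowValue g y = ∑ x ∈ S, netOut (fun u v => (g u v : ℤ)) x := by
        rw [Finset.sum_eq_single_of_mem y hy fun x hx hxy =>
          hcons x hxy (ne_of_mem_of_not_mem hx hz)]
        rfl
    _ = ∑ x ∈ S, ∑ u, ((g x u : ℤ) - g u x) := by simp only [netOut, Finset.sum_sub_distrib]
    _ = ∑ x ∈ S, ∑ u ∈ S, ((g x u : ℤ) - g u x) + ∑ x ∈ S, ∑ u ∈ Sᶜ, ((g x u : ℤ) - g u x) := by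
        simp only [← Finset.sum_add_distrib, Finset.sum_add_sum_compl]
    _ = ∑ x ∈ S, ∑ u ∈ Sᶜ, ((g x u : ℤ) - g u x) := by rw [hinner, zero_add]

theorem flowValue_le_of_not_reflTransGen_residual {g : V → V → ℕ} (hf : IsFlow N y z f)
    (hg : IsFlow N y z g) (hz : ¬ Relation.ReflTransGen (Residual N f) y z) :
    flowValue g y ≤ flowValue f y := by
  classical
  set S := Finset.univ.filter (Relation.ReflTransGen (Residual N f) y)
  have hyS : y ∈ S := by simp [S, Relation.ReflTransGen.refl]
  have hzS : z ∉ S := by simpa [S] using hz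
  rw [hg.flowValue_eq_sum_cut hyS hzS, hf.flowValue_eq_sum_cut hyS hzS]
  refine Finset.sum_le_sum fun x hx => Finset.sum_le_sum fun u hu => ?_
  have hxu : ¬ Residual N f x u := fun hxu => Finset.mem_compl.1 hu <| by
    simp only [S, Finset.mem_filter, Finset.mem_univ, true_and] at hx ⊢
    exact hx.tail hxu
  simp only [Residual, not_or, not_lt, not_le, Nat.lt_one_iff] at hxu
  have := hg.1 x u
  omega

theorem sum_count_left (l : List (V × V)) (x : V) :
    ∑ w, l.count (x, w) = (l.map Prod.fst).count x := by
  induction l with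
  | nil => simp
  | cons e l ih =>
    obtain ⟨a, b⟩ := e
    simp only [List.count_cons, Finset.sum_add_distrib, ih, List.map_cons, beq_iff_eq,
      Prod.mk.injEq]
    by_cases h : a = x <;> simp [h]

theorem sum_count_right (l : List (V × V)) (x : V) :
    ∑ u, l.count (u, x) = (l.map Prod.snd).count x := by
  induction l with
  | nil => simp
  | cons e l ih =>
    obtain ⟨a, b⟩ := e
    simp only [List.count_cons, Finset.sum_add_distrib, ih, List.map_cons, beq_iff_eq,
      Prod.mk.injEq]
    by_cases h : b = x <;> simp [h]

theorem netOut_chiGen_pair (a v : V) (b : Bool) (x : V) :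
    netOut (chiGen [a, v] [b]) x = (if x = a then 1 else 0) - if x = v then 1 else 0 := by
  simp only [netOut, chiGen, Finset.sum_sub_distrib]
  simp only [← Nat.cast_sum, sum_count_left, sum_count_right]
  cases b
  · simp [forwardArcs, backwardArcs, List.count_singleton, @eq_comm _ _ x]
    ring
  · simp [forwardArcs, backwardArcs, List.count_singleton, @eq_comm _ _ x]

theorem netOut_chiGen {a b : V} (hd : d.length + 1 = p.length) (ha : p.head? = some a)
    (hb : p.getLast? = some b) (x : V) :
    netOut (chiGen p d) x = (if x = a then 1 else 0) - if x = b then 1 else 0 := by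
  induction p generalizing a d with
  | nil => simp at ha
  | cons a' p ih =>
    cases p with
    | nil =>
      obtain rfl : d = [] := List.eq_nil_of_length_eq_zero (by simpa using hd)
      simp only [List.head?_cons, List.getLast?_singleton, Option.some.injEq] at ha hb
      subst ha hb
      simp [netOut, chiGen, forwardArcs, backwardArcs]
    | cons v p =>
      cases d with
      | nil => simp at hd
      | cons c d =>
        simp only [List.head?_cons, Option.some.injEq] at ha
        subst ha
        rw [List.getLast?_cons_cons] at hb
        rw [chiGen_cons_cons, netOut_add, netOut_chiGen_pair, ih (by simpa using hd) rfl hb]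
        ring

theorem IsAugPath.exists_isFlow_add_chiGen (hf : IsFlow N y z f) (hσ : IsAugPath N y z f p d) :
    ∃ g : V → V → ℕ, (∀ u v, (g u v : ℤ) = f u v + chiGen p d u v) ∧
      IsFlow N y z g ∧ flowValue g y = flowValue f y + 1 := by
  obtain ⟨h2, hnd, hy, hz, hd⟩ := hσ.1
  have hyz : y ≠ z := hnd.head_ne_getLast h2 hy hz
  set g : V → V → ℕ := fun u v => ((f u v : ℤ) + chiGen p d u v).toNat
  have hg : ∀ u v, (g u v : ℤ) = f u v + chiGen p d u v := fun u v =>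
    Int.toNat_of_nonneg (hσ.add_chiGen_nonneg u v)
  have hnet : ∀ x, netOut (fun u v => (g u v : ℤ)) x =
      netOut (fun u v => (f u v : ℤ)) x + netOut (chiGen p d) x := fun x => by
    rw [← netOut_add]
    exact congrArg (netOut · x) (funext₂ hg)
  rw [isFlow_iff_netOut] at hf
  refine ⟨g, hg, (isFlow_iff_netOut N y z g).2 ⟨fun u v => ?_, fun x hxy hxz => ?_⟩, ?_⟩
  · have := hσ.add_chiGen_le (hf.1 u v)
    rw [← hg] at this
    exact_mod_cast this
  · rw [hnet, hf.2 x hxy hxz, netOut_chiGen hd hy hz, if_neg hxy, if_neg hxz]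
    simp
  · rw [flowValue_eq_netOut, flowValue_eq_netOut, hnet, netOut_chiGen hd hy hz, if_pos rfl,
      if_neg hyz]
    ring

end Flows

end NetFlow

theorem augmenting_path_general {V : Type*} [Fintype V] [DecidableEq V]
    (N : Network V) (y z : V) (hyz : y ≠ z)
    (f : V → V → ℕ) (hf : NetFlow.IsFlow N y z f) (hnm : ¬ NetFlow.IsMaxFlow N y z f) :
    (∃ (p : List V) (d : List Bool), NetFlow.IsAugPath N y z f p d) ∧
      ∀ (p : List V) (d : List Bool), NetFlow.IsAugPath N y z f p d →
        ∃ g : V → V → ℕ,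
          (∀ u v : V, (g u v : ℤ) = (f u v : ℤ) + NetFlow.chiGen p d u v) ∧
          NetFlow.IsFlow N y z g ∧
          NetFlow.flowValue g y = NetFlow.flowValue f y + 1 := by
  refine ⟨?_, fun p d hσ => hσ.exists_isFlow_add_chiGen hf⟩
  by_contra hno
  refine hnm (NetFlow.isMaxFlow_of_forall_flowValue_le hf fun g hg => ?_)
  exact NetFlow.flowValue_le_of_not_reflTransGen_residual hf hg
    fun h => hno (NetFlow.exists_isAugPath_of_reflTransGen_residual hyz h)

/-- if `f` is a non-maximum flow from `y` to `z`, then an augmenting path for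
`f` exists, and for every augmenting path `σ`, `f + χ_σ` is a flow of value `v(f) + 1`. -/
theorem augmenting_path {V : Type*} [Fintype V] [DecidableEq V]
    (hV : 2 ≤ Fintype.card V) (N : Network V) (y z : V) (hyz : y ≠ z)
    (f : V → V → ℕ) (hf : NetFlow.IsFlow N y z f) (hnm : ¬ NetFlow.IsMaxFlow N y z f) :
    (∃ (p : List V) (d : List Bool), NetFlow.IsAugPath N y z f p d) ∧
      ∀ (p : List V) (d : List Bool), NetFlow.IsAugPath N y z f p d →
        ∃ g : V → V → ℕ,
          (∀ u v : V, (g u v : ℤ) = (f u v : ℤ) + NetFlow.chiGen p d u v) ∧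
          NetFlow.IsFlow N y z g ∧
          NetFlow.flowValue g y = NetFlow.flowValue f y + 1 :=
  augmenting_path_general N y z hyz f hf hnm
end

section
/- There exist networks N = (V, A, c) and N' = (V, A, c') on the same vertex set with c'(a) ≤ c(a) for all a ∈ A, and vertices x, y, z ∈ V distinct, such that φ^{N'}_{yz}(x) > φ^N_{yz}(x). (Concretely, one may take V = {y, v, u, x, z} with c equal to 1 on the arcs (y,v), (y,u), (v,x), (v,z), (x,z), (u,z) and 0 elsewhere, and c' obtained from c by setting the capacity of (v,z) to 0; then φ^{N'}_{yz}(x) = 1 > 0 = φ^N_{yz}(x).) -/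
namespace NetFlow

variable {V : Type*} [Fintype V] [DecidableEq V]

lemma flowValue_eq_in (N : Network V) {y z : V} (hyz : y ≠ z) {f : V → V → ℕ}
    (hf : IsFlow N y z f) :
    flowValue f y = (∑ u, (f u z : ℤ)) - ∑ u, (f z u : ℤ) := by
  classical
  set g : V → ℤ := fun x => (∑ u, (f u x : ℤ)) - ∑ u, (f x u : ℤ) with hg
  have htot : ∑ x, g x = 0 := by
    simp only [hg, Finset.sum_sub_distrib]
    rw [Finset.sum_comm]
    ring
  have hzero : ∀ x ∈ (Finset.univ : Finset V), x ∉ ({y, z} : Finset V) → g x = 0 := by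
    intro x _ hx
    simp only [Finset.mem_insert, Finset.mem_singleton, not_or] at hx
    have := hf.2 x hx.1 hx.2
    simp only [hg]
    have : (∑ u, (f u x : ℤ)) = ∑ u, (f x u : ℤ) := by exact_mod_cast congrArg (Nat.cast : ℕ → ℤ) this
    omega
  have hsub : ∑ x ∈ ({y, z} : Finset V), g x = ∑ x, g x :=
    Finset.sum_subset (Finset.subset_univ _) hzero
  rw [htot, Finset.sum_pair hyz] at hsub
  have : g y = -(g z) := by linarith
  simp only [flowValue, hg] at *
  linarith

lemma flowValue_le_out (N : Network V) {y z : V} {f : V → V → ℕ}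
    (hf : IsFlow N y z f) : flowValue f y ≤ ∑ u, (N.c y u : ℤ) := by
  have h1 : (∑ u, (f y u : ℤ)) ≤ ∑ u, (N.c y u : ℤ) :=
    Finset.sum_le_sum fun u _ => by exact_mod_cast hf.1 y u
  have h2 : (0 : ℤ) ≤ ∑ u, (f u y : ℤ) :=
    Finset.sum_nonneg fun u _ => by positivity
  simp only [flowValue]; linarith

lemma flowValue_le_in (N : Network V) {y z : V} (hyz : y ≠ z) {f : V → V → ℕ}
    (hf : IsFlow N y z f) : flowValue f y ≤ ∑ u, (N.c u z : ℤ) := by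
  rw [flowValue_eq_in N hyz hf]
  have h1 : (∑ u, (f u z : ℤ)) ≤ ∑ u, (N.c u z : ℤ) :=
    Finset.sum_le_sum fun u _ => by exact_mod_cast hf.1 u z
  have h2 : (0 : ℤ) ≤ ∑ u, (f z u : ℤ) :=
    Finset.sum_nonneg fun u _ => by positivity
  linarith

lemma maxFlowValue_eq_of (N : Network V) {y z : V} {m : ℕ}
    (f : V → V → ℕ) (hf : IsFlow N y z f) (hv : flowValue f y = (m : ℤ))
    (hub : ∀ g, IsFlow N y z g → flowValue g y ≤ (m : ℤ)) :
    maxFlowValue N y z = m := by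
  have hmem : m ∈ {k : ℕ | ∃ f, IsFlow N y z f ∧ flowValue f y = (k : ℤ)} := ⟨f, hf, hv⟩
  apply le_antisymm
  · apply csSup_le ⟨m, hmem⟩
    rintro k ⟨g, hg, hvg⟩
    have := hub g hg
    rw [hvg] at this
    exact_mod_cast this
  · apply le_csSup
    · refine ⟨m, ?_⟩
      rintro k ⟨g, hg, hvg⟩
      have := hub g hg
      rw [hvg] at this
      exact_mod_cast this
    · exact hmem

end NetFlow

namespace NetFlow

/-- Capacity: arcs (y,v),(y,u),(v,x),(v,z),(x,z),(u,z) with y=0, v=1, u=2, x=3, z=4. -/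
def exC : Fin 5 → Fin 5 → ℕ := fun a b =>
  if (a = 0 ∧ b = 1) ∨ (a = 0 ∧ b = 2) ∨ (a = 1 ∧ b = 3) ∨ (a = 1 ∧ b = 4) ∨
     (a = 3 ∧ b = 4) ∨ (a = 2 ∧ b = 4) then 1 else 0

/-- Same but with the arc (v,z) removed. -/
def exC' : Fin 5 → Fin 5 → ℕ := fun a b =>
  if (a = 0 ∧ b = 1) ∨ (a = 0 ∧ b = 2) ∨ (a = 1 ∧ b = 3) ∨
     (a = 3 ∧ b = 4) ∨ (a = 2 ∧ b = 4) then 1 else 0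

def exN : Network (Fin 5) := ⟨exC, by decide⟩
def exN' : Network (Fin 5) := ⟨exC', by decide⟩

def exF1 : Fin 5 → Fin 5 → ℕ := fun a b =>
  if (a = 0 ∧ b = 1) ∨ (a = 1 ∧ b = 4) ∨ (a = 0 ∧ b = 2) ∨ (a = 2 ∧ b = 4) then 1 else 0

def exF2 : Fin 5 → Fin 5 → ℕ := fun a b =>
  if (a = 0 ∧ b = 1) ∨ (a = 1 ∧ b = 3) ∨ (a = 3 ∧ b = 4) ∨
     (a = 0 ∧ b = 2) ∨ (a = 2 ∧ b = 4) then 1 else 0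

def exF3 : Fin 5 → Fin 5 → ℕ := fun a b =>
  if (a = 0 ∧ b = 2) ∨ (a = 2 ∧ b = 4) then 1 else 0

lemma mfv_N : maxFlowValue exN 0 4 = 2 := by
  refine maxFlowValue_eq_of _ exF1 ⟨by decide, by decide⟩ (by decide) (fun g hg => ?_)
  calc flowValue g 0 ≤ ∑ u, (exN.c 0 u : ℤ) := flowValue_le_out _ hg
    _ = 2 := by decide

lemma mfv_Nx : maxFlowValue (removeVerts exN {3}) 0 4 = 2 := by
  refine maxFlowValue_eq_of _ exF1 ⟨by decide, by decide⟩ (by decide) (fun g hg => ?_)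
  calc flowValue g 0 ≤ ∑ u, ((removeVerts exN {3}).c 0 u : ℤ) := flowValue_le_out _ hg
    _ = 2 := by decide

lemma mfv_N' : maxFlowValue exN' 0 4 = 2 := by
  refine maxFlowValue_eq_of _ exF2 ⟨by decide, by decide⟩ (by decide) (fun g hg => ?_)
  calc flowValue g 0 ≤ ∑ u, (exN'.c 0 u : ℤ) := flowValue_le_out _ hg
    _ = 2 := by decide

lemma mfv_N'x : maxFlowValue (removeVerts exN' {3}) 0 4 = 1 := by
  refine maxFlowValue_eq_of _ exF3 ⟨by decide, by decide⟩ (by decide) (fun g hg => ?_)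
  calc flowValue g 0 ≤ ∑ u, ((removeVerts exN' {3}).c u 4 : ℤ) :=
        flowValue_le_in _ (by decide) hg
    _ = 1 := by decide

end NetFlow

/-- there are networks `N, N'` on the same vertex set with `c' ≤ c` and
distinct vertices `x, y, z` such that `φ^{N'}_{yz}(x) > φ^N_{yz}(x)`. -/
theorem exists_phiDrop_increase :
    ∃ (N N' : Network (Fin 5)),
      (∀ u v : Fin 5, N'.c u v ≤ N.c u v) ∧
      ∃ x y z : Fin 5, x ≠ y ∧ x ≠ z ∧ y ≠ z ∧
        NetFlow.phiDrop N y z {x} < NetFlow.phiDrop N' y z {x} := by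
  refine ⟨NetFlow.exN, NetFlow.exN', by decide, 3, 0, 4, by decide, by decide, by decide, ?_⟩
  unfold NetFlow.phiDrop
  rw [NetFlow.mfv_N, NetFlow.mfv_Nx, NetFlow.mfv_N', NetFlow.mfv_N'x]
  norm_num
end
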